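/- The state space of the hypergraph H₅(19) — atoms {1,...,19} with blocks {1,2,3}, {1,4,5}, {1,6,7}, {2,8,9}, {2,10,11}, {3,12,13}, {3,14,15}, {4,8,12}, {4,10,14}, {5,9,15}, {5,11,13}, {6,13,16}, {6,15,17}, {7,11,18}, {7,12,19}, {8,17,18}, {9,16,19}, {10,17,19}, {14,16,18} — is affinely parametrized by (x,y) = (s(15), s(19)) over the pentagon {0 ≤ x ≤ 2/3, 0 ≤ y ≤ 2/3, x − y ≤ 1/3}, and has exactly 5 extreme points: (0,0), (0,2/3), (1/3,0), (2/3,1/3), (2/3,2/3). -/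

import Mathlib

/-- The 19 blocks of the hypergraph H₅(19) on atoms {1,...,19}. -/
def H5Blocks : Finset (Finset ℕ) :=
  { {1,2,3}, {1,4,5}, {1,6,7}, {2,8,9}, {2,10,11}, {3,12,13}, {3,14,15},
    {4,8,12}, {4,10,14}, {5,9,15}, {5,11,13}, {6,13,16}, {6,15,17},
    {7,11,18}, {7,12,19}, {8,17,18}, {9,16,19}, {10,17,19}, {14,16,18} }

/-- A state on H₅(19): nonnegative on the atoms, summing to 1 on every block. -/
def H5IsState (s : ℕ → ℝ) : Prop :=
  (∀ a ∈ Finset.Icc 1 19, 0 ≤ s a) ∧ ∀ b ∈ H5Blocks, ∑ a ∈ b, s a = 1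

/-- The state of H₅(19) with parameters `x = s 15`, `y = s 19`: `s 18 = y`,
`s 6 = 1/3 - x + y`, value `x` on atoms 1, 13, 15; value `2/3 - x` on atoms 3, 5;
value `2/3 - y` on atoms 7, 16, 17; and `1/3` on all remaining atoms. -/
noncomputable def H5StateOf (x y : ℝ) : ℕ → ℝ := fun a =>
  if a ∈ ({1, 13, 15} : Finset ℕ) then x
  else if a ∈ ({18, 19} : Finset ℕ) then y
  else if a = 6 then 1/3 - x + y
  else if a ∈ ({3, 5} : Finset ℕ) then 2/3 - x
  else if a ∈ ({7, 16, 17} : Finset ℕ) then 2/3 - y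
  else 1/3

/-- The pentagon {0 ≤ x ≤ 2/3, 0 ≤ y ≤ 2/3, x − y ≤ 1/3}. -/
def H5Pent : Set (ℝ × ℝ) :=
  {p | 0 ≤ p.1 ∧ p.1 ≤ 2/3 ∧ 0 ≤ p.2 ∧ p.2 ≤ 2/3 ∧ p.1 - p.2 ≤ 1/3}

/-! The 19 block equations have a two-dimensional affine solution space, parametrized by
`s 15` and `s 19`; nonnegativity at the atoms 15, 3, 19, 7 and 6 then cuts out exactly the
pentagon. The pentagon is the convex hull of the five listed points, so its extreme points are
among them, and each of them is the unique maximiser on the pentagon of a linear form. -/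

theorem h5StateOf_blockSum (x y : ℝ) : ∀ b ∈ H5Blocks, ∑ a ∈ b, H5StateOf x y a = 1 := by
  simp only [H5Blocks, Finset.mem_insert, Finset.mem_singleton, forall_eq_or_imp, forall_eq]
  norm_num [Finset.sum_insert, H5StateOf]
  exact ⟨by ring, by ring, by ring⟩

theorem h5StateOf_nonneg_iff (x y : ℝ) :
    (∀ a ∈ Finset.Icc 1 19, 0 ≤ H5StateOf x y a) ↔ (x, y) ∈ H5Pent := by
  constructor
  · intro h
    have h15 := h 15 (by decide)
    have h3 := h 3 (by decide)
    have h19 := h 19 (by decide)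
    have h7 := h 7 (by decide)
    have h6 := h 6 (by decide)
    norm_num [H5StateOf] at h15 h3 h19 h7 h6
    exact ⟨h15, by linarith, h19, by linarith, by linarith⟩
  · rintro ⟨hx, hx', hy, hy', hxy⟩ a ha
    obtain ⟨ha1, ha19⟩ := Finset.mem_Icc.1 ha
    interval_cases a <;> norm_num [H5StateOf] <;> linarith

theorem eq_h5StateOf_of_blockSum {s : ℕ → ℝ} (hs : ∀ b ∈ H5Blocks, ∑ a ∈ b, s a = 1) :
    ∀ a ∈ Finset.Icc 1 19, s a = H5StateOf (s 15) (s 19) a := by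
  simp only [H5Blocks, Finset.mem_insert, Finset.mem_singleton, forall_eq_or_imp, forall_eq] at hs
  norm_num [Finset.sum_insert] at hs
  intro a ha
  obtain ⟨ha1, ha19⟩ := Finset.mem_Icc.1 ha
  interval_cases a <;> norm_num [H5StateOf] <;> linarith

theorem Convex.smul_add_smul_add_smul_mem {𝕜 E : Type*} [Field 𝕜] [LinearOrder 𝕜]
    [IsStrictOrderedRing 𝕜] [AddCommGroup E] [Module 𝕜 E] {s : Set E} (hs : Convex 𝕜 s)
    {x y z : E} (hx : x ∈ s) (hy : y ∈ s) (hz : z ∈ s) {a b c : 𝕜} (ha : 0 ≤ a) (hb : 0 ≤ b)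
    (hc : 0 ≤ c) (habc : a + b + c = 1) : a • x + b • y + c • z ∈ s := by
  have := hs.sum_mem (t := Finset.univ) (w := ![a, b, c]) (z := ![x, y, z])
    (by simp [Fin.forall_fin_succ, ha, hb, hc]) (by simp [Fin.sum_univ_three, habc])
    (by simp [Fin.forall_fin_succ, hx, hy, hz])
  simpa [Fin.sum_univ_three] using this

theorem mem_extremePoints_of_forall_le_imp_eq {𝕜 E : Type*} [Field 𝕜] [LinearOrder 𝕜]
    [IsStrictOrderedRing 𝕜] [TopologicalSpace 𝕜] [AddCommGroup E] [Module 𝕜 E] [TopologicalSpace E]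
    {A : Set E} {v : E} (l : StrongDual 𝕜 E) (hv : v ∈ A)
    (h : ∀ q ∈ A, l v ≤ l q → q = v) : v ∈ A.extremePoints 𝕜 :=
  exposedPoints_subset_extremePoints ⟨hv, l, fun q hq => by
    rcases le_total (l q) (l v) with hle | hle
    · exact ⟨hle, h q hq⟩
    · obtain rfl := h q hq hle
      exact ⟨le_rfl, fun _ => rfl⟩⟩

abbrev h5Vertices : Set (ℝ × ℝ) := {(0, 0), (0, 2/3), (1/3, 0), (2/3, 1/3), (2/3, 2/3)}

theorem convex_h5Pent : Convex ℝ H5Pent := by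
  have hfst : IsLinearMap ℝ (Prod.fst : ℝ × ℝ → ℝ) := (LinearMap.fst ℝ ℝ ℝ).isLinear
  have hsnd : IsLinearMap ℝ (Prod.snd : ℝ × ℝ → ℝ) := (LinearMap.snd ℝ ℝ ℝ).isLinear
  have hsub : IsLinearMap ℝ (fun p : ℝ × ℝ => p.1 - p.2) :=
    (LinearMap.fst ℝ ℝ ℝ - LinearMap.snd ℝ ℝ ℝ).isLinear
  exact (convex_halfSpace_ge hfst 0).inter <| (convex_halfSpace_le hfst _).inter <|
    (convex_halfSpace_ge hsnd 0).inter <| (convex_halfSpace_le hsnd _).inter <|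
    convex_halfSpace_le hsub _

theorem h5Vertices_subset_h5Pent : h5Vertices ⊆ H5Pent := by
  rintro v (rfl | rfl | rfl | rfl | rfl) <;> norm_num [H5Pent]

-- fan triangulation from the vertex (0,0), split along the diagonals to (2/3,1/3) and (2/3,2/3)
theorem h5Pent_subset_convexHull : H5Pent ⊆ convexHull ℝ h5Vertices := by
  rintro ⟨x, y⟩ ⟨hx, hx', hy, hy', hxy⟩
  have hull := convex_convexHull ℝ h5Vertices
  have mem : ∀ v ∈ h5Vertices, v ∈ convexHull ℝ h5Vertices := fun v hv => subset_convexHull ℝ _ hv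
  rcases le_total (2 * y) x with h₁ | h₁
  · convert hull.smul_add_smul_add_smul_mem (mem (0, 0) (by simp)) (mem (1/3, 0) (by simp))
      (mem (2/3, 1/3) (by simp)) (a := 1 - 3 * x + 3 * y) (b := 3 * x - 6 * y) (c := 3 * y)
      (by linarith) (by linarith) (by linarith) (by ring) using 1
    ext <;> simp <;> ring
  rcases le_total y x with h₂ | h₂
  · convert hull.smul_add_smul_add_smul_mem (mem (0, 0) (by simp)) (mem (2/3, 1/3) (by simp))
      (mem (2/3, 2/3) (by simp)) (a := 1 - 3/2 * x) (b := 3 * x - 3 * y) (c := 3 * y - 3/2 * x)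
      (by linarith) (by linarith) (by linarith) (by ring) using 1
    ext <;> simp <;> ring
  · convert hull.smul_add_smul_add_smul_mem (mem (0, 0) (by simp)) (mem (0, 2/3) (by simp))
      (mem (2/3, 2/3) (by simp)) (a := 1 - 3/2 * y) (b := 3/2 * (y - x)) (c := 3/2 * x)
      (by linarith) (by linarith) (by linarith) (by ring) using 1
    ext <;> simp <;> ring

theorem h5Pent_eq_convexHull : H5Pent = convexHull ℝ h5Vertices :=
  h5Pent_subset_convexHull.antisymm (convexHull_min h5Vertices_subset_h5Pent convex_h5Pent)

theorem extremePoints_h5Pent : H5Pent.extremePoints ℝ = h5Vertices := by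
  refine (h5Pent_eq_convexHull ▸ extremePoints_convexHull_subset).antisymm ?_
  have exposed : ∀ v ∈ h5Vertices, ∀ a b : ℝ,
      (∀ q ∈ H5Pent, a * v.1 + b * v.2 ≤ a * q.1 + b * q.2 → q = v) →
        v ∈ H5Pent.extremePoints ℝ := fun v hv a b h =>
    mem_extremePoints_of_forall_le_imp_eq (a • ContinuousLinearMap.fst ℝ ℝ ℝ +
      b • ContinuousLinearMap.snd ℝ ℝ ℝ) (h5Vertices_subset_h5Pent hv) (by simpa using h)
  -- `(a, b)` is the sum of the outer normals of the two edges meeting at the vertex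
  simp only [Set.insert_subset_iff, Set.singleton_subset_iff]
  refine ⟨exposed _ (by simp) (-1) (-1) ?_, exposed _ (by simp) (-1) 1 ?_,
    exposed _ (by simp) 1 (-2) ?_, exposed _ (by simp) 2 (-1) ?_, exposed _ (by simp) 1 1 ?_⟩ <;>
  · rintro ⟨x, y⟩ ⟨hx, hx', hy, hy', hxy⟩ h
    norm_num at h
    ext <;> dsimp only <;> linarith

/-- The state space of H₅(19) is affinely parametrized by `(x, y) = (s 15, s 19)` over
the pentagon {0 ≤ x ≤ 2/3, 0 ≤ y ≤ 2/3, x − y ≤ 1/3}, which has exactly 5 extreme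
points: (0,0), (0,2/3), (1/3,0), (2/3,1/3), (2/3,2/3). -/
theorem H5_state_space :
    (∀ s : ℕ → ℝ, H5IsState s →
      (s 15, s 19) ∈ H5Pent ∧ ∀ a ∈ Finset.Icc 1 19, s a = H5StateOf (s 15) (s 19) a) ∧
    (∀ p ∈ H5Pent, H5IsState (H5StateOf p.1 p.2)) ∧
    Set.extremePoints ℝ H5Pent =
      {(0, 0), (0, 2/3), (1/3, 0), (2/3, 1/3), (2/3, 2/3)} := by
  refine ⟨fun s ⟨hpos, hsum⟩ => ?_, fun p hp => ?_, extremePoints_h5Pent⟩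
  · have hs := eq_h5StateOf_of_blockSum hsum
    exact ⟨(h5StateOf_nonneg_iff _ _).1 fun a ha => hs a ha ▸ hpos a ha, hs⟩
  · exact ⟨(h5StateOf_nonneg_iff _ _).2 hp, h5StateOf_blockSum _ _⟩
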